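/- arXiv:2212.03959 — 4 statements merged into one kernel-verified Lean document; each statement's English description precedes it below -/
import Mathlib

section
/- Let T be a finite tree and let v₁v₂…v_t (t ≥ 4) be a path in T with deg(v₁) < deg(v_t) and deg(v₂) > deg(v_{t−1}). Let T′ be the graph obtained from T by deleting the edges v₁v₂ and v_{t−1}v_t and adding the edges v₁v_{t−1} and v₂v_t. Then T′ is a tree, every vertex has the same degree in T′ as in T, and SO(T′) < SO(T). -/
open SimpleGraph

/-- Degree of a vertex. -/
noncomputable def deg {V : Type*} (G : SimpleGraph V) (v : V) : ℕ :=
  Nat.card (G.neighborSet v)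

/-- Sombor index. -/
noncomputable def somborIndex {V : Type*} (G : SimpleGraph V) : ℝ :=
  ∑ᶠ e ∈ G.edgeSet,
    Sym2.lift ⟨fun u v => Real.sqrt ((deg G u : ℝ) ^ 2 + (deg G v : ℝ) ^ 2),
      fun u v => by simp [add_comm]⟩ e

/-- Multiset of degrees of non-pendant vertices. -/
noncomputable def degSeq {V : Type*} [Fintype V] (G : SimpleGraph V) : Multiset ℕ :=
  ((Finset.univ : Finset V).filter (fun v => deg G v ≠ 1)).val.map (deg G)

def pathCondition {V : Type*} (G : SimpleGraph V) : Prop :=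
  ∀ ⦃u v : V⦄ (p : G.Walk u v), p.IsPath → 3 ≤ p.length →
    deg G u < deg G v → deg G (p.getVert 1) ≤ deg G (p.getVert (p.length - 1))

def attachPendants {V : Type*} (G : SimpleGraph V) (v : V) (k : ℕ) :
    SimpleGraph (V ⊕ Fin k) where
  Adj x y :=
    match x, y with
    | Sum.inl a, Sum.inl b => G.Adj a b
    | Sum.inl a, Sum.inr _ => a = v
    | Sum.inr _, Sum.inl b => b = v
    | Sum.inr _, Sum.inr _ => False
  symm := by
    constructor
    rintro (a | i) (b | j) h
    · exact h.symm
    · exact h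
    · exact h
    · exact h.elim
  loopless := by
    constructor
    rintro (a | i) h
    · exact G.irrefl h
    · exact h

/-!
The swap is a 2-switch: it deletes `ab`, `cd` and adds `ac`, `bd`, where `a = v₁`, `b = v₂`,
`c = v_{t-1}`, `d = v_t`, so every vertex keeps its degree. The middle of the path still joins
`b` to `c` after the deletion, hence `T'` is connected; by the handshake lemma it has as many
edges as `T`, so it is a tree. Only the four swapped edges change their Sombor terms, and
writing `A, B, C, D` for the degrees of `a, b, c, d`, the new terms are smaller because
`(A² + B²)(C² + D²) - (A² + C²)(B² + D²) = (B² - C²)(D² - A²) > 0`.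
-/

namespace SimpleGraph

variable {V : Type*}

section Walks

variable {G : SimpleGraph V} {u v w : V}

lemma Walk.IsPath.getVert_ne {p : G.Walk u v} (hp : p.IsPath) {i j : ℕ} (hi : i ≤ p.length)
    (hj : j ≤ p.length) (hij : i ≠ j) : p.getVert i ≠ p.getVert j :=
  fun h ↦ hij (hp.getVert_injOn hi hj h)

lemma IsAcyclic.length_eq_two_of_adj_of_adj (hG : G.IsAcyclic) {p : G.Walk u v}
    (hp : p.IsPath) (huv : u ≠ v) (huw : G.Adj u w) (hwv : G.Adj w v) : p.length = 2 := by
  have hq : (Walk.cons huw (Walk.cons hwv Walk.nil)).IsPath := by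
    simp [huw.ne, huv, hwv.ne]
  simpa using congrArg (fun q : G.Path u v ↦ q.1.length)
    ((hG.subsingleton_path u v).elim ⟨p, hp⟩ ⟨_, hq⟩)

lemma Walk.IsTrail.reachable_snd_penultimate {p : G.Walk u v} (hp : p.IsTrail)
    (hlen : 2 ≤ p.length) :
    (G.deleteEdges {s(u, p.snd), s(p.penultimate, v)}).Reachable p.snd p.penultimate := by
  have hnil : ¬p.Nil := by rw [Walk.not_nil_iff_lt_length]; omega
  have htail := Walk.length_tail_add_one hnil
  have htnil : ¬p.tail.Nil := by rw [Walk.not_nil_iff_lt_length]; omega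
  have hpen : p.tail.penultimate = p.penultimate := by
    simp only [Walk.penultimate, Walk.getVert_tail]
    congr 1
    omega
  have hedges :
      p.edges = s(u, p.snd) :: (p.tail.dropLast.edges ++ [s(p.tail.penultimate, v)]) := by
    rw [← List.concat_eq_append, ← Walk.edges_concat _ (Walk.adj_penultimate htnil),
      Walk.concat_dropLast, ← Walk.edges_cons (p.adj_snd hnil), Walk.cons_tail_eq _ hnil]
  have hnodup := hedges ▸ hp.edges_nodup
  simp only [List.nodup_cons, List.nodup_append, List.mem_append, List.mem_singleton] at hnodup
  rw [← hpen]
  refine ⟨p.tail.dropLast.toDeleteEdges _ fun e he ↦ ?_⟩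
  rintro (rfl | rfl)
  · exact hnodup.1 (Or.inl he)
  · exact hnodup.2.2.2 _ he _ rfl rfl

end Walks

lemma Connected.of_adj_imp_reachable {G H : SimpleGraph V} (hG : G.Connected)
    (h : ∀ ⦃x y⦄, G.Adj x y → H.Reachable x y) : H.Connected := by
  have := hG.nonempty
  refine ⟨fun x y ↦ (hG x y).elim fun w ↦ ?_⟩
  induction w with
  | nil => rfl
  | cons hxy _ ih => exact (h hxy).trans ih

lemma card_edgeSet_eq_of_deg_eq [Finite V] {G H : SimpleGraph V}
    (h : ∀ w, deg H w = deg G w) : Nat.card H.edgeSet = Nat.card G.edgeSet := by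
  classical
  have := Fintype.ofFinite V
  have handshake : ∀ K : SimpleGraph V, ∑ w, deg K w = 2 * Nat.card K.edgeSet := fun K ↦ by
    simp only [deg, Nat.card_eq_fintype_card, card_neighborSet_eq_degree,
      sum_degrees_eq_twice_card_edges, edgeFinset_card]
  have := handshake H
  simp only [h, handshake G] at this
  omega

lemma IsTree.of_connected_of_deg_eq [Finite V] {G H : SimpleGraph V} (hG : G.IsTree)
    (hH : H.Connected) (h : ∀ w, deg H w = deg G w) : H.IsTree := by
  rw [isTree_iff_connected_and_card] at hG ⊢
  exact ⟨hH, card_edgeSet_eq_of_deg_eq h ▸ hG.2⟩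

def twoSwitch (G : SimpleGraph V) (a b c d : V) : SimpleGraph V :=
  G.deleteEdges {s(a, b), s(c, d)} ⊔ fromEdgeSet {s(a, c), s(b, d)}

section TwoSwitch

variable {G : SimpleGraph V} {a b c d : V}

lemma twoSwitch_comm (G : SimpleGraph V) (a b c d : V) :
    G.twoSwitch a b c d = G.twoSwitch c d a b := by
  ext x y
  simp only [twoSwitch, sup_adj, deleteEdges_adj, fromEdgeSet_adj, Set.mem_insert_iff,
    Set.mem_singleton_iff, Sym2.eq_swap]
  tauto

lemma twoSwitch_flip (G : SimpleGraph V) (a b c d : V) :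
    G.twoSwitch a b c d = G.twoSwitch b a d c := by
  ext x y
  simp only [twoSwitch, sup_adj, deleteEdges_adj, fromEdgeSet_adj, Set.mem_insert_iff,
    Set.mem_singleton_iff, Sym2.eq_swap]
  tauto

lemma neighborSet_twoSwitch_left (hab : G.Adj a b) (hac : a ≠ c) (had : a ≠ d) :
    (G.twoSwitch a b c d).neighborSet a = insert c (G.neighborSet a \ {b}) := by
  ext x
  simp only [twoSwitch, mem_neighborSet, sup_adj, deleteEdges_adj, fromEdgeSet_adj,
    Set.mem_insert_iff, Set.mem_singleton_iff, Set.mem_sdiff, Sym2.eq_iff]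
  grind [G.ne_of_adj]

lemma neighborSet_twoSwitch_of_notMem {w : V} (hw : w ∉ ({a, b, c, d} : Set V)) :
    (G.twoSwitch a b c d).neighborSet w = G.neighborSet w := by
  ext x
  simp only [twoSwitch, mem_neighborSet, sup_adj, deleteEdges_adj, fromEdgeSet_adj,
    Set.mem_insert_iff, Set.mem_singleton_iff, Sym2.eq_iff] at hw ⊢
  grind

lemma deg_twoSwitch_left (hab : G.Adj a b) (hnac : ¬G.Adj a c) (hac : a ≠ c) (had : a ≠ d) :
    deg (G.twoSwitch a b c d) a = deg G a := by
  rw [deg, deg, neighborSet_twoSwitch_left hab hac had, Nat.card_coe_set_eq,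
    Nat.card_coe_set_eq, Set.ncard_exchange (s := G.neighborSet a) hnac hab]

lemma deg_twoSwitch (hab : G.Adj a b) (hcd : G.Adj c d) (hnac : ¬G.Adj a c)
    (hnbd : ¬G.Adj b d) (hac : a ≠ c) (had : a ≠ d) (hbc : b ≠ c) (hbd : b ≠ d) (w : V) :
    deg (G.twoSwitch a b c d) w = deg G w := by
  by_cases hw : w ∈ ({a, b, c, d} : Set V)
  · rcases hw with rfl | rfl | rfl | rfl
    · exact deg_twoSwitch_left hab hnac hac had
    · rw [twoSwitch_flip]
      exact deg_twoSwitch_left hab.symm hnbd hbd hbc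
    · rw [twoSwitch_comm]
      exact deg_twoSwitch_left hcd (fun h ↦ hnac h.symm) hac.symm hbc.symm
    · rw [twoSwitch_comm, twoSwitch_flip]
      exact deg_twoSwitch_left hcd.symm (fun h ↦ hnbd h.symm) hbd.symm had.symm
  · rw [deg, deg, neighborSet_twoSwitch_of_notMem hw]

lemma edgeSet_twoSwitch (hac : a ≠ c) (hbd : b ≠ d) :
    (G.twoSwitch a b c d).edgeSet = G.edgeSet \ {s(a, b), s(c, d)} ∪ {s(a, c), s(b, d)} := by
  ext ⟨x, y⟩
  simp only [twoSwitch, edgeSet_sup, edgeSet_deleteEdges, edgeSet_fromEdgeSet, Set.mem_union,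
    Set.mem_sdiff, mem_edgeSet, Set.mem_insert_iff, Set.mem_singleton_iff, Sym2.mem_diagSet,
    Sym2.mk_isDiag_iff, Sym2.eq_iff]
  grind

lemma connected_twoSwitch (hG : G.Connected) (hac : a ≠ c) (hbd : b ≠ d)
    (hbc : (G.deleteEdges {s(a, b), s(c, d)}).Reachable b c) :
    (G.twoSwitch a b c d).Connected := by
  have hle : G.deleteEdges {s(a, b), s(c, d)} ≤ G.twoSwitch a b c d := le_sup_left
  have hadj_ac : (G.twoSwitch a b c d).Adj a c := by simp [twoSwitch, hac]
  have hadj_bd : (G.twoSwitch a b c d).Adj b d := by simp [twoSwitch, hbd]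
  have hbc' := hbc.mono hle
  have hab : (G.twoSwitch a b c d).Reachable a b := hadj_ac.reachable.trans hbc'.symm
  have hcd : (G.twoSwitch a b c d).Reachable c d := hbc'.symm.trans hadj_bd.reachable
  refine hG.of_adj_imp_reachable fun x y hxy ↦ ?_
  by_cases he : s(x, y) ∈ ({s(a, b), s(c, d)} : Set (Sym2 V))
  · rcases he with he | he <;> rcases Sym2.eq_iff.mp he with ⟨rfl, rfl⟩ | ⟨rfl, rfl⟩
    exacts [hab, hab.symm, hcd, hcd.symm]
  · exact (hle ((deleteEdges_adj ..).mpr ⟨hxy, he⟩)).reachable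

end TwoSwitch

end SimpleGraph

noncomputable def somborWeight {V : Type*} (G : SimpleGraph V) : Sym2 V → ℝ :=
  Sym2.lift ⟨fun u v ↦ √((deg G u : ℝ) ^ 2 + (deg G v : ℝ) ^ 2),
    fun u v ↦ by simp [add_comm]⟩

section Sombor

variable {V : Type*} {G H : SimpleGraph V}

lemma somborIndex_eq_finsum (G : SimpleGraph V) :
    somborIndex G = ∑ᶠ e ∈ G.edgeSet, somborWeight G e := rfl

lemma somborWeight_mk (G : SimpleGraph V) (u v : V) :
    somborWeight G s(u, v) = √((deg G u : ℝ) ^ 2 + (deg G v : ℝ) ^ 2) := rfl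

lemma somborWeight_congr (h : ∀ w, deg H w = deg G w) : somborWeight H = somborWeight G := by
  simp only [somborWeight, h]

lemma somborIndex_add_finsum_eq [Finite V] (hdeg : ∀ w, deg H w = deg G w)
    {s t : Set (Sym2 V)} (hs : s ⊆ G.edgeSet) (ht : Disjoint G.edgeSet t)
    (hH : H.edgeSet = G.edgeSet \ s ∪ t) :
    somborIndex H + ∑ᶠ e ∈ s, somborWeight G e =
      somborIndex G + ∑ᶠ e ∈ t, somborWeight G e := by
  rw [somborIndex_eq_finsum, somborWeight_congr hdeg, hH, somborIndex_eq_finsum,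
    finsum_mem_union (ht.mono_left Set.sdiff_subset) (Set.toFinite _) (Set.toFinite _)]
  conv_rhs => rw [← Set.sdiff_union_of_subset hs,
    finsum_mem_union Set.disjoint_sdiff_left (Set.toFinite _) (Set.toFinite _)]
  ring

lemma somborIndex_twoSwitch_add [Finite V] {a b c d : V} (hab : G.Adj a b) (hcd : G.Adj c d)
    (hnac : ¬G.Adj a c) (hnbd : ¬G.Adj b d) (hac : a ≠ c) (had : a ≠ d) (hbc : b ≠ c)
    (hbd : b ≠ d) :
    somborIndex (G.twoSwitch a b c d) + (somborWeight G s(a, b) + somborWeight G s(c, d)) =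
      somborIndex G + (somborWeight G s(a, c) + somborWeight G s(b, d)) := by
  have hs : s(a, b) ≠ s(c, d) := by simp [hac, had]
  have ht : s(a, c) ≠ s(b, d) := by simp [hab.ne, had]
  rw [← finsum_mem_pair hs, ← finsum_mem_pair ht]
  refine somborIndex_add_finsum_eq (deg_twoSwitch hab hcd hnac hnbd hac had hbc hbd) ?_ ?_
    (edgeSet_twoSwitch hac hbd)
  · rintro e (rfl | rfl)
    exacts [hab, hcd]
  · rw [Set.disjoint_right]
    rintro e (rfl | rfl)
    exacts [hnac, hnbd]

end Sombor

lemma sqrt_add_sqrt_lt_sqrt_add_sqrt {A B C D : ℝ} (hA : 0 ≤ A) (hC : 0 ≤ C) (hAD : A < D)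
    (hCB : C < B) :
    √(A ^ 2 + C ^ 2) + √(B ^ 2 + D ^ 2) < √(A ^ 2 + B ^ 2) + √(C ^ 2 + D ^ 2) := by
  have hCB2 : C ^ 2 < B ^ 2 := by nlinarith
  have hAD2 : A ^ 2 < D ^ 2 := by nlinarith
  have hcross : (A ^ 2 + C ^ 2) * (B ^ 2 + D ^ 2) < (A ^ 2 + B ^ 2) * (C ^ 2 + D ^ 2) := by
    nlinarith [mul_pos (sub_pos.2 hCB2) (sub_pos.2 hAD2)]
  have hsqrt := Real.sqrt_lt_sqrt (by positivity) hcross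
  rw [Real.sqrt_mul (by positivity), Real.sqrt_mul (by positivity)] at hsqrt
  refine lt_of_pow_lt_pow_left₀ 2 (by positivity) ?_
  rw [add_sq, add_sq, Real.sq_sqrt (by positivity), Real.sq_sqrt (by positivity),
    Real.sq_sqrt (by positivity), Real.sq_sqrt (by positivity)]
  nlinarith

/-- Swapping the end edges of a path `v₁v₂…v_t` (`t ≥ 4`) with `deg v₁ < deg v_t` and
`deg v₂ > deg v_{t−1}` yields a tree with the same degrees and strictly smaller Sombor index. -/
theorem sombor_edge_swap {V : Type*} [Fintype V] (T : SimpleGraph V) (hT : T.IsTree)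
    (u v : V) (p : T.Walk u v) (hp : p.IsPath) (hlen : 3 ≤ p.length)
    (h1 : deg T u < deg T v)
    (h2 : deg T (p.getVert (p.length - 1)) < deg T (p.getVert 1))
    (T' : SimpleGraph V)
    (hT' : T' =
      (T.deleteEdges {s(u, p.getVert 1), s(p.getVert (p.length - 1), v)}) ⊔
        SimpleGraph.fromEdgeSet {s(u, p.getVert (p.length - 1)), s(p.getVert 1, v)}) :
    T'.IsTree ∧ (∀ w : V, deg T' w = deg T w) ∧ somborIndex T' < somborIndex T := by
  rw [show T' = T.twoSwitch u p.snd p.penultimate v from hT']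
  have hnil : ¬p.Nil := by rw [Walk.not_nil_iff_lt_length]; omega
  have hub := p.adj_snd hnil
  have hcv := p.adj_penultimate hnil
  have huv : u ≠ v := by
    simpa using hp.getVert_ne (i := 0) (j := p.length) (by omega) le_rfl (by omega)
  have huc : u ≠ p.penultimate := by
    simpa using hp.getVert_ne (i := 0) (by omega) (by omega) (by omega)
  have hbc : p.snd ≠ p.penultimate := hp.getVert_ne (by omega) (by omega) (by omega)
  have hbv : p.snd ≠ v := by
    simpa using hp.getVert_ne (i := 1) (j := p.length) (by omega) le_rfl (by omega)
  have hnuc : ¬T.Adj u p.penultimate := fun h ↦ by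
    have := hT.isAcyclic.length_eq_two_of_adj_of_adj hp huv h hcv; omega
  have hnbv : ¬T.Adj p.snd v := fun h ↦ by
    have := hT.isAcyclic.length_eq_two_of_adj_of_adj hp huv hub h; omega
  have hdeg := deg_twoSwitch hub hcv hnuc hnbv huc huv hbc hbv
  have hconn := connected_twoSwitch hT.connected huc hbv
    (hp.isTrail.reachable_snd_penultimate (by omega))
  refine ⟨hT.of_connected_of_deg_eq hconn hdeg, hdeg, ?_⟩
  have hswap := somborIndex_twoSwitch_add hub hcv hnuc hnbv huc huv hbc hbv
  have hlt := sqrt_add_sqrt_lt_sqrt_add_sqrt (Nat.cast_nonneg _) (Nat.cast_nonneg _)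
    (Nat.cast_lt (α := ℝ).mpr h1) (Nat.cast_lt (α := ℝ).mpr h2)
  simp only [somborWeight_mk] at hswap
  linarith
end

section
/- Let T be a finite tree satisfying the path condition. Then there is no path v₁v₂…v_t in T with t ≥ 3 such that deg(v₁) > deg(v_i) and deg(v_t) > deg(v_i) for some interior index i ∈ {2, …, t−1}. -/
open SimpleGraph

/-!
Take a counterexample path `u = p₀, p₁, …, pₙ = v` with low interior vertex `pᵢ`. Since
`deg u > deg pᵢ ≥ 1`, `u` has a neighbour `w ≠ p₁`, which lies off the path because the tree is
acyclic. If `deg w > deg pᵢ`, the path `w u p₁ … v` is a longer counterexample. Otherwise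
`deg w < m := min (deg u) (deg v)`, and the path condition applied to `w u p₁ … pₖ₊₁` turns
`deg pₖ₊₁ ≥ m` into `deg pₖ ≥ deg u ≥ m`; by downward induction from `pₙ = v` we get
`deg pᵢ ≥ m`, a contradiction. So every counterexample extends to a longer one, which is
impossible in a finite graph.
-/

section

variable {V : Type*} {G : SimpleGraph V}

theorem pathCondition.le_deg_getVert (hG : pathCondition G) {a b : V} {r : G.Walk a b}
    (hr : r.IsPath) {m : ℕ} (ha : deg G a < m) (hsnd : m ≤ deg G r.snd) (hb : m ≤ deg G b)
    {k : ℕ} (hk₂ : 2 ≤ k) (hk : k ≤ r.length) : m ≤ deg G (r.getVert k) := by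
  refine Nat.decreasingInduction' (P := fun k ↦ m ≤ deg G (r.getVert k))
    (fun j hj hkj ih ↦ ?_) hk (by rwa [Walk.getVert_length])
  have hlen : (r.take (j + 1)).length = j + 1 := by rw [Walk.take_length]; omega
  have := hG (r.take (j + 1)) (hr.take _) (by omega) (ha.trans_le (by simpa using ih))
  rw [Walk.take_getVert, Walk.take_getVert, hlen, show min (j + 1) 1 = 1 by omega,
    show min (j + 1) (j + 1 - 1) = j by omega] at this
  exact hsnd.trans this

theorem deg_pos_of_adj [Finite V] {u v : V} (h : G.Adj u v) : 0 < deg G u :=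
  have : Nonempty (G.neighborSet u) := ⟨⟨v, h⟩⟩
  Nat.card_pos

theorem exists_adj_ne_of_one_lt_deg {u : V} (h : 1 < deg G u) (x : V) :
    ∃ w, G.Adj u w ∧ w ≠ x :=
  Set.exists_ne_of_one_lt_ncard (by rwa [deg, Nat.card_coe_set_eq] at h) x

namespace SimpleGraph.Walk

def HasLowInteriorVertex {u v : V} (p : G.Walk u v) : Prop :=
  ∃ i, 0 < i ∧ i < p.length ∧ deg G (p.getVert i) < deg G u ∧ deg G (p.getVert i) < deg G v

theorem HasLowInteriorVertex.exists_cons [Finite V] (hG : G.IsAcyclic) (hpc : pathCondition G)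
    {u v : V} {p : G.Walk u v} (hp : p.IsPath) (hlow : p.HasLowInteriorVertex) :
    ∃ (w : V) (h : G.Adj w u), (cons h p).IsPath ∧ (cons h p).HasLowInteriorVertex := by
  obtain ⟨i, hi₀, hi, hu, hv⟩ := hlow
  have hu₁ : 1 < deg G u := lt_of_le_of_lt (deg_pos_of_adj (p.adj_getVert_succ hi)) hu
  obtain ⟨w, huw, hw⟩ := exists_adj_ne_of_one_lt_deg hu₁ p.snd
  have hq : (cons huw.symm p).IsPath := hp.cons fun h ↦ hw (hG.eq_snd_of_adj_start hp huw h)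
  refine ⟨w, huw.symm, hq, i + 1, by omega, by simpa using hi, ?_, by simpa using hv⟩
  by_contra! hwi
  rw [getVert_cons_succ] at hwi
  have := hpc.le_deg_getVert hq (m := min (deg G u) (deg G v)) (lt_min (by omega) (by omega))
    (by simp) (by simp) (k := i + 1) (by omega) (by rw [length_cons]; omega)
  rw [getVert_cons_succ] at this
  omega

end SimpleGraph.Walk

end

/-- In a tree satisfying the path condition, there is no path `v₁…v_t` (`t ≥ 3`) with an
interior vertex `v_i` such that `deg v₁ > deg v_i` and `deg v_t > deg v_i`. -/
theorem no_low_interior_vertex {V : Type*} [Fintype V] (T : SimpleGraph V) (hT : T.IsTree)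
    (hpc : pathCondition T) :
    ¬ ∃ (u v : V) (p : T.Walk u v), p.IsPath ∧ 2 ≤ p.length ∧
      ∃ i : ℕ, 1 ≤ i ∧ i ≤ p.length - 1 ∧
        deg T (p.getVert i) < deg T u ∧ deg T (p.getVert i) < deg T v := by
  rintro ⟨u, v, p, hp, -, i, hi₁, hi, hu, hv⟩
  have arbitrarily_long : ∀ n, ∃ (u' : V) (q : T.Walk u' v),
      q.IsPath ∧ q.HasLowInteriorVertex ∧ n ≤ q.length := by
    intro n
    induction n with
    | zero => exact ⟨u, p, hp, ⟨i, by omega, by omega, hu, hv⟩, Nat.zero_le _⟩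
    | succ n ih =>
      obtain ⟨u', q, hq, hlow, hn⟩ := ih
      obtain ⟨w, h, hq', hlow'⟩ := hlow.exists_cons hT.isAcyclic hpc hq
      exact ⟨w, .cons h q, hq', hlow', by simpa using hn⟩
  obtain ⟨_, q, hq, -, hn⟩ := arbitrarily_long (Fintype.card V)
  exact absurd hq.length_lt (not_lt_of_ge hn)
end

section
/- Let T be a finite tree satisfying the path condition. Then there do not exist two edges v₁v₂ and v₃v₄ of T sharing no endpoint such that deg(v₁) < deg(v₃) ≤ deg(v₄) < deg(v₂). -/
open SimpleGraph

/-!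
Between two disjoint edges of a tree there is a path `x x' … y' y` whose first and last edges are
the two given edges, in some orientation. The path condition, applied to this path and to its
reverse, gives `deg x < deg y → deg x' ≤ deg y'` and `deg y < deg x → deg y' ≤ deg x'`; each of
the four possible orientations of the edges `v₁v₂`, `v₃v₄` violates one of the two.
-/

namespace SimpleGraph

variable {V : Type*} {G : SimpleGraph V}

theorem IsAcyclic.exists_eq_cons_of_mem_support (hG : G.IsAcyclic) {u v w : V}
    (h : G.Adj u v) {p : G.Walk u w} (hp : p.IsPath) (hv : v ∈ p.support) :
    ∃ q : G.Walk v w, p = Walk.cons h q := by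
  classical
  have hedge : p.takeUntil v hv = Walk.cons h .nil :=
    congrArg Subtype.val <| (hG.subsingleton_path u v).elim
      ⟨_, hp.takeUntil hv⟩ ⟨Walk.cons h .nil, by simp [h.ne]⟩
  refine ⟨p.dropUntil v hv, ?_⟩
  conv_lhs => rw [← p.take_spec hv, hedge]
  rfl

theorem IsAcyclic.exists_isPath_avoiding_edge_end (hG : G.IsAcyclic) {a b w : V}
    (hab : G.Adj a b) {p : G.Walk b w} (hp : p.IsPath) :
    ∃ x x' : V, ∃ q : G.Walk x' w, s(x, x') = s(a, b) ∧ q.IsPath ∧ x ∉ q.support ∧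
      q.support ⊆ p.support := by
  classical
  by_cases ha : a ∈ p.support
  · obtain ⟨q, rfl⟩ := hG.exists_eq_cons_of_mem_support hab.symm hp ha
    obtain ⟨hq, hb⟩ := (Walk.cons_isPath_iff _ _).1 hp
    exact ⟨b, a, q, Sym2.eq_swap, hq, hb, by simp⟩
  · exact ⟨a, b, p, rfl, hp, ha, List.Subset.refl _⟩

theorem IsAcyclic.exists_isPath_between_edges (hG : G.IsAcyclic) {a b c d : V}
    (hab : G.Adj a b) (hcd : G.Adj c d) (hbc : G.Reachable b c) :
    ∃ x x' y' y : V, ∃ r : G.Walk x' y', s(x, x') = s(a, b) ∧ s(y', y) = s(c, d) ∧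
      r.IsPath ∧ x ∉ r.support ∧ y ∉ r.support := by
  classical
  obtain ⟨p, hp⟩ := hbc.some.toPath
  obtain ⟨x, x', q, hx, hq, hxq, -⟩ := hG.exists_isPath_avoiding_edge_end hab hp
  obtain ⟨y, y', r, hy, hr, hyr, hrq⟩ :=
    hG.exists_isPath_avoiding_edge_end hcd.symm hq.reverse
  refine ⟨x, x', y', y, r.reverse, hx, by rw [Sym2.eq_swap, hy, Sym2.eq_swap], hr.reverse,
    ?_, by simpa using hyr⟩
  simp only [Walk.support_reverse, List.mem_reverse] at hrq ⊢
  exact fun hxr => hxq (by simpa using hrq hxr)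

end SimpleGraph

theorem pathCondition.deg_le_of_lt {V : Type*} {G : SimpleGraph V} (hpc : pathCondition G)
    {a b c d : V} (hab : G.Adj a b) (hcd : G.Adj c d) {r : G.Walk b c} (hr : r.IsPath)
    (ha : a ∉ r.support) (hd : d ∉ r.support) (hlt : deg G a < deg G d) :
    deg G b ≤ deg G c := by
  obtain rfl | hbc := eq_or_ne b c
  · rfl
  have had : a ≠ d := by rintro rfl; exact lt_irrefl _ hlt
  have hr_pos : r.length ≠ 0 := fun h => hbc (Walk.eq_of_length_eq_zero h)
  have hpath : (Walk.cons hab (r.concat hcd)).IsPath :=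
    (hr.concat hd hcd).cons (by simpa [Walk.support_concat] using ⟨ha, had⟩)
  simpa [Walk.length_concat, Walk.getVert_append, Walk.concat_eq_append] using
    hpc _ hpath (by rw [Walk.length_cons, Walk.length_concat]; omega) hlt

theorem no_bad_edge_pair_general {V : Type*} (T : SimpleGraph V) (hT : T.IsTree)
    (hpc : pathCondition T) :
    ¬ ∃ v₁ v₂ v₃ v₄ : V, T.Adj v₁ v₂ ∧ T.Adj v₃ v₄ ∧
      v₁ ≠ v₃ ∧ v₁ ≠ v₄ ∧ v₂ ≠ v₃ ∧ v₂ ≠ v₄ ∧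
      deg T v₁ < deg T v₃ ∧ deg T v₃ ≤ deg T v₄ ∧ deg T v₄ < deg T v₂ := by
  rintro ⟨v₁, v₂, v₃, v₄, h₁₂, h₃₄, -, -, -, -, d₁₃, d₃₄, d₄₂⟩
  obtain ⟨x, x', y', y, r, hx, hy, hr, hxr, hyr⟩ :=
    hT.isAcyclic.exists_isPath_between_edges h₁₂ h₃₄ (hT.connected v₂ v₃)
  have hxx' : T.Adj x x' := by rwa [← mem_edgeSet, hx]
  have hy'y : T.Adj y' y := by rwa [← mem_edgeSet, hy]
  have forward := hpc.deg_le_of_lt hxx' hy'y hr hxr hyr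
  have backward := hpc.deg_le_of_lt hy'y.symm hxx'.symm hr.reverse (by simpa) (by simpa)
  rcases Sym2.eq_iff.1 hx with ⟨rfl, rfl⟩ | ⟨rfl, rfl⟩ <;>
    rcases Sym2.eq_iff.1 hy with ⟨rfl, rfl⟩ | ⟨rfl, rfl⟩ <;> omega

/-- In a tree satisfying the path condition, there are no two edges `v₁v₂` and `v₃v₄` sharing
no endpoint with `deg v₁ < deg v₃ ≤ deg v₄ < deg v₂`. -/
theorem no_bad_edge_pair {V : Type*} [Fintype V] (T : SimpleGraph V) (hT : T.IsTree)
    (hpc : pathCondition T) :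
    ¬ ∃ v₁ v₂ v₃ v₄ : V, T.Adj v₁ v₂ ∧ T.Adj v₃ v₄ ∧
      v₁ ≠ v₃ ∧ v₁ ≠ v₄ ∧ v₂ ≠ v₃ ∧ v₂ ≠ v₄ ∧
      deg T v₁ < deg T v₃ ∧ deg T v₃ ≤ deg T v₄ ∧ deg T v₄ < deg T v₂ :=
  no_bad_edge_pair_general T hT hpc
end

section
/- Let q, p′, p, r, s be real numbers with 1 ≤ q ≤ p′ ≤ p and 1 ≤ s ≤ r. Then h_r(p) − h_r(q) + h_s(p′) − h_s(p) ≤ 0, where h_a(x) = √(a² + x²) − √(x² + 1). -/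
/-- For a real `a ≥ 1`, `h_a(x) = √(a² + x²) − √(x² + 1)`. -/
noncomputable def hFun (a x : ℝ) : ℝ := Real.sqrt (a ^ 2 + x ^ 2) - Real.sqrt (x ^ 2 + 1)

lemma sqrt_diff_anti (c d x y : ℝ) (hc : 0 ≤ c) (hcd : c ≤ d) (hx : 0 ≤ x) (hxy : x ≤ y) :
    Real.sqrt (d + y ^ 2) - Real.sqrt (c + y ^ 2) ≤
      Real.sqrt (d + x ^ 2) - Real.sqrt (c + x ^ 2) := by
  have hx2 : x ^ 2 ≤ y ^ 2 := by nlinarith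
  have hcx : (0:ℝ) ≤ c + x ^ 2 := by positivity
  have hA : Real.sqrt (d + y ^ 2) ^ 2 = d + y ^ 2 := Real.sq_sqrt (by nlinarith)
  have hB : Real.sqrt (c + y ^ 2) ^ 2 = c + y ^ 2 := Real.sq_sqrt (by nlinarith)
  have hC : Real.sqrt (d + x ^ 2) ^ 2 = d + x ^ 2 := Real.sq_sqrt (by nlinarith)
  have hD : Real.sqrt (c + x ^ 2) ^ 2 = c + x ^ 2 := Real.sq_sqrt hcx
  have hAB : Real.sqrt (c + y ^ 2) ≤ Real.sqrt (d + y ^ 2) :=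
    Real.sqrt_le_sqrt (by linarith)
  have hCD : Real.sqrt (c + x ^ 2) ≤ Real.sqrt (d + x ^ 2) :=
    Real.sqrt_le_sqrt (by linarith)
  have hDB : Real.sqrt (c + x ^ 2) ≤ Real.sqrt (c + y ^ 2) :=
    Real.sqrt_le_sqrt (by linarith)
  have hCA : Real.sqrt (d + x ^ 2) ≤ Real.sqrt (d + y ^ 2) :=
    Real.sqrt_le_sqrt (by linarith)
  have hDpos : 0 ≤ Real.sqrt (c + x ^ 2) := Real.sqrt_nonneg _
  nlinarith [mul_nonneg (sub_nonneg.2 hAB) (sub_nonneg.2 hDB),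
    mul_nonneg (sub_nonneg.2 hCD) (sub_nonneg.2 hCA),
    sq_nonneg (Real.sqrt (d + y ^ 2) - Real.sqrt (c + y ^ 2)),
    sq_nonneg (Real.sqrt (d + x ^ 2) - Real.sqrt (c + x ^ 2))]

/-- If `1 ≤ q ≤ p′ ≤ p` and `1 ≤ s ≤ r`, then
`h_r(p) − h_r(q) + h_s(p′) − h_s(p) ≤ 0`. -/
theorem h_telescoping_ineq (q p' p r s : ℝ) (hq : 1 ≤ q) (hqp' : q ≤ p') (hp'p : p' ≤ p)
    (hs : 1 ≤ s) (hsr : s ≤ r) :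
    hFun r p - hFun r q + hFun s p' - hFun s p ≤ 0 := by
  have hs2 : (1:ℝ) ≤ s ^ 2 := by nlinarith
  have hsr2 : s ^ 2 ≤ r ^ 2 := by nlinarith
  have h1 : Real.sqrt (s ^ 2 + p' ^ 2) - Real.sqrt (1 + p' ^ 2) ≤
      Real.sqrt (s ^ 2 + q ^ 2) - Real.sqrt (1 + q ^ 2) :=
    sqrt_diff_anti 1 (s ^ 2) q p' zero_le_one hs2 (by linarith) hqp'
  have h2 : Real.sqrt (r ^ 2 + p ^ 2) - Real.sqrt (s ^ 2 + p ^ 2) ≤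
      Real.sqrt (r ^ 2 + q ^ 2) - Real.sqrt (s ^ 2 + q ^ 2) :=
    sqrt_diff_anti (s ^ 2) (r ^ 2) q p (by linarith) hsr2 (by linarith) (by linarith)
  simp only [hFun]
  have e1 : Real.sqrt (p' ^ 2 + 1) = Real.sqrt (1 + p' ^ 2) := by rw [add_comm]
  have e2 : Real.sqrt (q ^ 2 + 1) = Real.sqrt (1 + q ^ 2) := by rw [add_comm]
  linarith
end
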